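/- arXiv:2311.06026 — 3 statements merged into one kernel-verified Lean document; each statement's English description precedes it below -/
import Mathlib

section
/- Let ϑ : Z → ℝ ∪ {+∞} be a proper, lsc, sublinear function with z̄ = 0 and let μ̄ ∈ ri ∂ϑ(0) (relative interior of the subdifferential at the origin). Then there exists ε > 0 such that for every pair (z, μ) in the graph of ∂ϑ with ‖z‖ ≤ ε and ‖μ − μ̄‖ ≤ ε, one has μ ∈ ri ∂ϑ(0) and μ ∈ ri ∂ϑ(z). -/
/-!
By positive homogeneity, a subgradient `μ` of `ϑ` at `z` satisfies `⟪μ, z⟫ = ϑ z`, so `∂ϑ(z)` is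
the face of `∂ϑ(0)` on which `⟪·, z⟫` attains its maximum `ϑ z`. In particular `μ ∈ ∂ϑ(0)`, hence
`μ` lies in the affine span of `∂ϑ(0)` and, being close to `μ̄`, in its relative interior. A linear
functional maximised over a set at a relative interior point is constant on the set, so this face
is all of `∂ϑ(0)`: `∂ϑ(z) = ∂ϑ(0)`.
-/

open Filter Topology
open scoped RealInnerProductSpace

variable {Z : Type*} [NormedAddCommGroup Z] [InnerProductSpace ℝ Z] [FiniteDimensional ℝ Z]

/-- The convex subdifferential of an extended-real-valued function. -/
def subdiff (f : Z → EReal) (x : Z) : Set Z :=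
  {v | ∀ y, f x + ((⟪v, y - x⟫ : ℝ) : EReal) ≤ f y}

section IntrinsicInterior

variable {E : Type*} [NormedAddCommGroup E] [NormedSpace ℝ E] {s : Set E} {x : E}

theorem exists_dist_lt_subset_intrinsicInterior (hx : x ∈ intrinsicInterior ℝ s) :
    ∃ ε > 0, ∀ y ∈ affineSpan ℝ s, dist y x < ε → y ∈ intrinsicInterior ℝ s := by
  obtain ⟨p, hp, rfl⟩ := hx
  obtain ⟨ε, hε, hball⟩ := Metric.isOpen_iff.mp isOpen_interior p hp
  exact ⟨ε, hε, fun y hy hyx => ⟨⟨y, hy⟩, hball hyx, rfl⟩⟩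

theorem exists_pos_add_smul_sub_mem_of_mem_intrinsicInterior
    (hx : x ∈ intrinsicInterior ℝ s) {v : E} (hv : v ∈ s) :
    ∃ δ > (0 : ℝ), x + δ • (x - v) ∈ s := by
  obtain ⟨ε, hε, hball⟩ := exists_dist_lt_subset_intrinsicInterior hx
  have hx_span : x ∈ affineSpan ℝ s := subset_affineSpan ℝ s (intrinsicInterior_subset hx)
  have hlim : Tendsto (fun δ : ℝ => x + δ • (x - v)) (𝓝[>] 0) (𝓝 x) := by
    have : Continuous (fun δ : ℝ => x + δ • (x - v)) := by fun_prop
    simpa using (this.tendsto 0).mono_left nhdsWithin_le_nhds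
  obtain ⟨δ, hδ_dist, hδ_pos⟩ :=
    ((hlim.eventually (Metric.ball_mem_nhds x hε)).and self_mem_nhdsWithin).exists
  refine ⟨δ, hδ_pos, intrinsicInterior_subset (hball _ ?_ hδ_dist)⟩
  simpa [add_comm] using AffineSubspace.smul_vsub_vadd_mem _ δ hx_span
    (subset_affineSpan ℝ s hv) hx_span

theorem LinearMap.eq_of_isMaxOn_of_mem_intrinsicInterior (f : E →ₗ[ℝ] ℝ)
    (hx : x ∈ intrinsicInterior ℝ s) (hmax : IsMaxOn f s x) {v : E} (hv : v ∈ s) :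
    f v = f x := by
  obtain ⟨δ, hδ, hmem⟩ := exists_pos_add_smul_sub_mem_of_mem_intrinsicInterior hx hv
  have := isMaxOn_iff.1 hmax _ hmem
  simp only [map_add, map_smul, map_sub, smul_eq_mul] at this
  nlinarith [isMaxOn_iff.1 hmax v hv]

end IntrinsicInterior

section Subdifferential

variable {E : Type*} [NormedAddCommGroup E] [InnerProductSpace ℝ E] {ϑ : E → EReal}

theorem mem_subdiff_zero_iff (h0 : ϑ 0 = 0) {v : E} :
    v ∈ subdiff ϑ 0 ↔ ∀ y, ((⟪v, y⟫ : ℝ) : EReal) ≤ ϑ y := by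
  simp [subdiff, h0]

theorem ne_top_of_mem_subdiff {x y μ : E} (hμ : μ ∈ subdiff ϑ x) (hy : ϑ y ≠ ⊤) : ϑ x ≠ ⊤ := by
  intro htop
  have := hμ y
  rw [htop, EReal.top_add_coe, top_le_iff] at this
  exact hy this

theorem inner_eq_of_mem_subdiff (hpos : ∀ t : ℝ, 0 < t → ∀ z, ϑ (t • z) = (t : EReal) * ϑ z)
    {z μ : E} {r : ℝ} (hz : ϑ z = r) (hμ : μ ∈ subdiff ϑ z) : ⟪μ, z⟫ = r := by
  -- The subgradient inequality at `t • z` reads `(t - 1) (⟪μ, z⟫ - r) ≤ 0`; take `t = 2, 1/2`.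
  have hray : ∀ t : ℝ, 0 < t → (t - 1) * (⟪μ, z⟫ - r) ≤ 0 := by
    intro t ht
    have := hμ (t • z)
    rw [hpos t ht, hz, show t • z - z = (t - 1) • z by rw [sub_smul, one_smul],
      real_inner_smul_right, ← EReal.coe_mul, ← EReal.coe_add, EReal.coe_le_coe_iff] at this
    linarith
  nlinarith [hray 2 two_pos, hray (1 / 2) one_half_pos]

theorem subdiff_eq_setOf_inner_eq (h0 : ϑ 0 = 0)
    (hpos : ∀ t : ℝ, 0 < t → ∀ z, ϑ (t • z) = (t : EReal) * ϑ z) {z : E} {r : ℝ} (hz : ϑ z = r) :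
    subdiff ϑ z = {v ∈ subdiff ϑ 0 | ⟪v, z⟫ = r} := by
  ext v
  have hsplit : ∀ y, ((⟪v, y⟫ : ℝ) : EReal) = ⟪v, z⟫ + ((⟪v, y - z⟫ : ℝ) : EReal) := by
    intro y
    rw [← EReal.coe_add, inner_sub_right, add_sub_cancel]
  refine ⟨fun hv => ?_, fun ⟨hv0, hvz⟩ y => ?_⟩
  · have hvz := inner_eq_of_mem_subdiff hpos hz hv
    refine ⟨(mem_subdiff_zero_iff h0).2 fun y => ?_, hvz⟩
    rw [hsplit, hvz, ← hz]
    exact hv y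
  · rw [hz, ← hvz, ← hsplit]
    exact (mem_subdiff_zero_iff h0).1 hv0 y

theorem subdiff_eq_subdiff_zero_of_mem_intrinsicInterior (h0 : ϑ 0 = 0)
    (hpos : ∀ t : ℝ, 0 < t → ∀ z, ϑ (t • z) = (t : EReal) * ϑ z) {z μ : E} {r : ℝ}
    (hz : ϑ z = r) (hμ : μ ∈ subdiff ϑ z) (hri : μ ∈ intrinsicInterior ℝ (subdiff ϑ 0)) :
    subdiff ϑ z = subdiff ϑ 0 := by
  rw [subdiff_eq_setOf_inner_eq h0 hpos hz] at hμ ⊢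
  have hmax : IsMaxOn (innerₛₗ ℝ z) (subdiff ϑ 0) μ := isMaxOn_iff.2 fun v hv => by
    have := (mem_subdiff_zero_iff h0).1 hv z
    rw [hz, EReal.coe_le_coe_iff, ← hμ.2] at this
    simpa only [innerₛₗ_apply_apply, real_inner_comm _ z] using this
  refine Set.sep_eq_self_iff_mem_true.2 fun v hv => ?_
  have := (innerₛₗ ℝ z).eq_of_isMaxOn_of_mem_intrinsicInterior hri hmax hv
  simpa only [innerₛₗ_apply_apply, real_inner_comm _ z, hμ.2] using this

end Subdifferential

theorem relative_interior_stability_general (ϑ : Z → EReal)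
    (h0 : ϑ 0 = 0)
    (hpos : ∀ t : ℝ, 0 < t → ∀ z, ϑ (t • z) = (t : EReal) * ϑ z)
    (μb : Z) (hμb : μb ∈ intrinsicInterior ℝ (subdiff ϑ 0)) :
    ∃ ε > (0 : ℝ), ∀ z μ : Z, μ ∈ subdiff ϑ z → ‖z‖ ≤ ε → ‖μ - μb‖ ≤ ε →
      μ ∈ intrinsicInterior ℝ (subdiff ϑ 0) ∧ μ ∈ intrinsicInterior ℝ (subdiff ϑ z) := by
  obtain ⟨ε, hε, hball⟩ := exists_dist_lt_subset_intrinsicInterior hμb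
  refine ⟨ε / 2, half_pos hε, fun z μ hμ _ hμ_near => ?_⟩
  have hz_ne_top : ϑ z ≠ ⊤ := ne_top_of_mem_subdiff (y := 0) hμ (by simp [h0])
  have hz_ne_bot : ϑ z ≠ ⊥ := ne_bot_of_le_ne_bot (EReal.coe_ne_bot _)
    ((mem_subdiff_zero_iff h0).1 (intrinsicInterior_subset hμb) z)
  have hz : ϑ z = ((ϑ z).toReal : EReal) := (EReal.coe_toReal hz_ne_top hz_ne_bot).symm
  have hμ0 : μ ∈ subdiff ϑ 0 := ((subdiff_eq_setOf_inner_eq h0 hpos hz).subset hμ).1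
  have hri : μ ∈ intrinsicInterior ℝ (subdiff ϑ 0) :=
    hball μ (subset_affineSpan ℝ _ hμ0) (by rw [dist_eq_norm]; linarith)
  exact ⟨hri, by rwa [subdiff_eq_subdiff_zero_of_mem_intrinsicInterior h0 hpos hz hμ hri]⟩

/-- If `μ̄` lies in the relative interior of `∂ϑ(0)` for a proper lsc sublinear `ϑ`, then all
pairs `(z, μ)` in the graph of `∂ϑ` near `(0, μ̄)` satisfy `μ ∈ ri ∂ϑ(0)` and `μ ∈ ri ∂ϑ(z)`. -/
theorem relative_interior_stability (ϑ : Z → EReal)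
    (hproper_bot : ∀ z, ϑ z ≠ ⊥) (hproper_top : ∃ z, ϑ z ≠ ⊤)
    (hlsc : LowerSemicontinuous ϑ)
    (h0 : ϑ 0 = 0)
    (hpos : ∀ t : ℝ, 0 < t → ∀ z, ϑ (t • z) = (t : EReal) * ϑ z)
    (hconv : ∀ z₁ z₂ : Z, ∀ a b : ℝ, 0 ≤ a → 0 ≤ b → a + b = 1 →
      ϑ (a • z₁ + b • z₂) ≤ (a : EReal) * ϑ z₁ + (b : EReal) * ϑ z₂)
    (μb : Z) (hμb : μb ∈ intrinsicInterior ℝ (subdiff ϑ 0)) :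
    ∃ ε > (0 : ℝ), ∀ z μ : Z, μ ∈ subdiff ϑ z → ‖z‖ ≤ ε → ‖μ - μb‖ ≤ ε →
      μ ∈ intrinsicInterior ℝ (subdiff ϑ 0) ∧ μ ∈ intrinsicInterior ℝ (subdiff ϑ z) :=
  relative_interior_stability_general ϑ h0 hpos μb hμb
end

section
/- Let C be a nonempty convex set in a finite-dimensional Hilbert space X and v̄ ∈ C. Then the normal cone N_C(v̄) is a linear subspace of X if and only if v̄ ∈ ri C. -/
open Filter Topology
open scoped RealInnerProductSpace

variable {X : Type*} [NormedAddCommGroup X] [InnerProductSpace ℝ X] [FiniteDimensional ℝ X]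

/-- The (convex) normal cone to a set `C` at `v̄`. -/
def normalConeConvex (C : Set X) (v : X) : Set X :=
  {w | ∀ u ∈ C, ⟪w, u - v⟫ ≤ (0 : ℝ)}

/-- Metric characterization of membership in the intrinsic interior. -/
lemma mem_intrinsicInterior_iff_metric {C : Set X} {vb : X} (hvb : vb ∈ C) :
    vb ∈ intrinsicInterior ℝ C ↔
      ∃ ε > 0, ∀ u ∈ affineSpan ℝ C, dist u vb < ε → u ∈ C := by
  constructor
  · rintro ⟨y, hy, hyx⟩
    rw [mem_interior_iff_mem_nhds, Metric.mem_nhds_iff] at hy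
    obtain ⟨ε, hε, hball⟩ := hy
    refine ⟨ε, hε, fun u hu hdist => ?_⟩
    have : (⟨u, hu⟩ : affineSpan ℝ C) ∈ Metric.ball y ε := by
      rw [Metric.mem_ball, Subtype.dist_eq, hyx]
      exact hdist
    exact hball this
  · rintro ⟨ε, hε, h⟩
    refine ⟨⟨vb, subset_affineSpan ℝ C hvb⟩, ?_, rfl⟩
    rw [mem_interior_iff_mem_nhds, Metric.mem_nhds_iff]
    refine ⟨ε, hε, fun z hz => ?_⟩
    rw [Metric.mem_ball, Subtype.dist_eq] at hz
    exact h z.1 z.2 hz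

/-- For a nonempty convex set `C` and `v̄ ∈ C`, the normal cone `N_C(v̄)` is a linear
subspace of `X` if and only if `v̄` belongs to the relative interior of `C`. -/
theorem normalCone_subspace_iff_mem_ri (C : Set X) (hC : Convex ℝ C) (hne : C.Nonempty)
    (vb : X) (hvb : vb ∈ C) :
    (∃ S : Submodule ℝ X, (S : Set X) = normalConeConvex C vb) ↔
      vb ∈ intrinsicInterior ℝ C := by
  set V : Submodule ℝ X := vectorSpan ℝ C with hVdef
  have hsubC : ∀ u ∈ C, u - vb ∈ V := fun u hu => vsub_mem_vectorSpan ℝ hu hvb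
  have hmemAS : ∀ u : X, u ∈ affineSpan ℝ C ↔ u - vb ∈ V := by
    intro u
    rw [← AffineSubspace.vsub_right_mem_direction_iff_mem (subset_affineSpan ℝ C hvb) u,
      direction_affineSpan]
    rfl
  constructor
  · rintro ⟨S, hS⟩
    -- work in the subspace V
    set D' : Set ↥V := {x : ↥V | vb + ↑x ∈ C} with hD'def
    have h0D : (0 : ↥V) ∈ D' := by simp [hD'def, hvb]
    have hD'conv : Convex ℝ D' := by
      intro a ha b hb p q hp hq hpq
      have h := hC ha hb hp hq hpq
      have h1 : p • vb + q • vb = vb := by rw [← add_smul, hpq, one_smul]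
      have key : vb + ((p • a + q • b : ↥V) : X) = p • (vb + ↑a) + q • (vb + ↑b) := by
        push_cast
        rw [smul_add, smul_add]
        nth_rewrite 1 [← h1]
        abel
      show vb + ((p • a + q • b : ↥V) : X) ∈ C
      rw [key]
      exact h
    -- the span of D' in V is everything
    have hmap : Submodule.map V.subtype (Submodule.span ℝ D') = V := by
      rw [Submodule.map_span]
      apply le_antisymm
      · rw [Submodule.span_le]
        rintro x ⟨a, _, rfl⟩
        exact a.2
      · refine le_trans (le_of_eq (vectorSpan_eq_span_vsub_set_right ℝ hvb)) ?_
        rw [Submodule.span_le]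
        rintro x ⟨u, hu, rfl⟩
        refine Submodule.subset_span ⟨⟨u - vb, hsubC u hu⟩, ?_, ?_⟩
        · show vb + (u - vb) ∈ C
          simpa using hu
        · simp [vsub_eq_sub]
    have hspanD : Submodule.span ℝ D' = ⊤ := by
      apply Submodule.map_injective_of_injective V.injective_subtype
      rw [hmap, Submodule.map_subtype_top]
    have hAS : affineSpan ℝ D' = ⊤ := by
      rw [AffineSubspace.affineSpan_eq_top_iff_vectorSpan_eq_top_of_nonempty ℝ ↥V ↥V ⟨0, h0D⟩]
      rw [eq_top_iff, ← hspanD, vectorSpan_def]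
      apply Submodule.span_le.2
      intro d hd
      apply Submodule.subset_span
      exact ⟨d, hd, 0, h0D, by simp⟩
    have hint : (interior D').Nonempty :=
      hD'conv.interior_nonempty_iff_affineSpan_eq_top.2 hAS
    by_cases h0 : (0 : ↥V) ∈ interior D'
    · rw [mem_intrinsicInterior_iff_metric hvb]
      obtain ⟨ε, hε, hball⟩ := Metric.mem_nhds_iff.1 (mem_interior_iff_mem_nhds.1 h0)
      refine ⟨ε, hε, fun u hu hd => ?_⟩
      have hx : u - vb ∈ V := (hmemAS u).1 hu
      have hmemball : (⟨u - vb, hx⟩ : ↥V) ∈ Metric.ball 0 ε := by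
        rw [Metric.mem_ball, dist_zero_right]
        show ‖u - vb‖ < ε
        rwa [dist_eq_norm] at hd
      have := hball hmemball
      have h2 : vb + (u - vb) ∈ C := this
      simpa using h2
    · exfalso
      obtain ⟨f, hf⟩ := geometric_hahn_banach_open_point hD'conv.interior isOpen_interior h0
      obtain ⟨z, hz⟩ := hint
      have hfz : f z < 0 := by simpa using hf z hz
      have hfD : ∀ a ∈ D', f a ≤ 0 := by
        intro a ha
        by_contra hfa
        push_neg at hfa
        set t : ℝ := (-f z) / (f a - f z) with ht
        have hden : 0 < f a - f z := by linarith
        have ht0 : 0 < t := div_pos (by linarith) hden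
        have ht1 : t < 1 := (div_lt_one hden).2 (by linarith)
        have hmem : (1 - t) • z + t • a ∈ interior D' :=
          hD'conv.openSegment_interior_self_subset_interior hz ha
            ⟨1 - t, t, by linarith, ht0, by ring, rfl⟩
        have hlt := hf _ hmem
        have hval : f ((1 - t) • z + t • a) = (1 - t) * f z + t * f a := by
          simp [map_add, map_smul, smul_eq_mul]
        rw [hval] at hlt
        have hzero : (1 - t) * f z + t * f a = 0 := by
          rw [ht]
          field_simp
          ring
        simp at hlt
        linarith
      haveI : CompleteSpace ↥V := FiniteDimensional.complete ℝ ↥V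
      set w' := (InnerProductSpace.toDual ℝ ↥V).symm f with hw'def
      have hw' : ∀ x : ↥V, ⟪w', x⟫ = f x := fun x => InnerProductSpace.toDual_symm_apply
      have hwN : (↑w' : X) ∈ normalConeConvex C vb := by
        intro u hu
        have hx : u - vb ∈ V := hsubC u hu
        have hxD : (⟨u - vb, hx⟩ : ↥V) ∈ D' := by
          show vb + (u - vb) ∈ C
          simpa using hu
        calc ⟪(↑w' : X), u - vb⟫ = ⟪w', (⟨u - vb, hx⟩ : ↥V)⟫ :=
              (Submodule.coe_inner V w' ⟨u - vb, hx⟩).symm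
          _ = f ⟨u - vb, hx⟩ := hw' _
          _ ≤ 0 := hfD _ hxD
      have hwS : (↑w' : X) ∈ S := by
        rw [← SetLike.mem_coe, hS]; exact hwN
      have hnegN : (-(↑w' : X)) ∈ normalConeConvex C vb := by
        rw [← hS, SetLike.mem_coe]; exact S.neg_mem hwS
      have hzD : z ∈ D' := interior_subset hz
      have h2 := hnegN _ hzD
      rw [inner_neg_left] at h2
      have heq : ⟪(↑w' : X), (vb + ↑z) - vb⟫ = f z := by
        rw [add_sub_cancel_left, ← Submodule.coe_inner, hw']
      rw [heq] at h2
      linarith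
  · intro hri
    obtain ⟨ε, hε, hball⟩ := (mem_intrinsicInterior_iff_metric hvb).1 hri
    refine ⟨Vᗮ, ?_⟩
    ext w
    simp only [SetLike.mem_coe]
    constructor
    · intro hw u hu
      have h := (Submodule.mem_orthogonal V w).1 hw (u - vb) (hsubC u hu)
      rw [real_inner_comm] at h
      exact le_of_eq h
    · intro hw
      have claim : ∀ u ∈ C, ⟪w, u - vb⟫ = 0 := by
        intro u hu
        have hle : ⟪w, u - vb⟫ ≤ 0 := hw u hu
        have hge : 0 ≤ ⟪w, u - vb⟫ := by
          set t : ℝ := ε / (2 * (‖vb - u‖ + 1)) with ht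
          have htpos : 0 < t := by positivity
          have hp : vb + t • (vb - u) ∈ C := by
            apply hball
            · rw [hmemAS]
              have hv1 : vb - u ∈ V := by
                have := hsubC u hu
                have := V.neg_mem this
                simpa using this
              simpa using V.smul_mem t hv1
            · rw [dist_eq_norm]
              have : vb + t • (vb - u) - vb = t • (vb - u) := by abel
              rw [this, norm_smul, Real.norm_eq_abs, abs_of_pos htpos]
              have h2 : ‖vb - u‖ < 2 * (‖vb - u‖ + 1) := by
                have := norm_nonneg (vb - u); linarith
              calc t * ‖vb - u‖ < t * (2 * (‖vb - u‖ + 1)) :=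
                    mul_lt_mul_of_pos_left h2 htpos
                _ = ε := by
                    rw [ht]
                    field_simp
          have hle2 := hw _ hp
          rw [add_sub_cancel_left, inner_smul_right] at hle2
          have h3 : ⟪w, vb - u⟫ ≤ 0 := by nlinarith
          have h4 : vb - u = -(u - vb) := by abel
          rw [h4, inner_neg_right] at h3
          linarith
        linarith
      have hker : V ≤ LinearMap.ker (innerSL ℝ w : X →ₗ[ℝ] ℝ) := by
        rw [hVdef, vectorSpan_def]
        apply Submodule.span_le.2
        rintro x ⟨u, hu, u', hu', rfl⟩
        rw [SetLike.mem_coe, LinearMap.mem_ker]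
        show ⟪w, u -ᵥ u'⟫ = 0
        rw [vsub_eq_sub, show u - u' = (u - vb) - (u' - vb) by abel, inner_sub_right,
          claim u hu, claim u' hu']
        ring
      rw [Submodule.mem_orthogonal']
      intro u hu
      have := hker hu
      rwa [LinearMap.mem_ker] at this
end

section
/- Let ϑ : Z → ℝ ∪ {+∞} be a proper, lsc, sublinear function with μ̄ ∈ ri ∂ϑ(0). Then for all w ∈ K := N_{∂ϑ(0)}(μ̄) (which is a linear subspace), for all sequences t_k ↓ 0 and (z^k, μ^k) → (0, μ̄) with μ^k ∈ ∂ϑ(z^k), the second-order difference quotients satisfy limsup_k [ϑ(z^k + t_k w) − ϑ(z^k) − t_k⟨μ^k, w⟩]/(t_k²/2) ≤ 0 and liminf ≥ 0; i.e., the limit is 0. -/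
open Filter Topology
open scoped RealInnerProductSpace

variable {Z : Type*} [NormedAddCommGroup Z] [InnerProductSpace ℝ Z] [FiniteDimensional ℝ Z]

lemma mem_subdiff_zero' {ϑ : Z → EReal} (h0 : ϑ 0 = 0) {v : Z} :
    v ∈ subdiff ϑ 0 ↔ ∀ y, ((⟪v, y⟫ : ℝ) : EReal) ≤ ϑ y := by
  simp [subdiff, h0]

lemma subadd' {ϑ : Z → EReal} (hbot : ∀ z, ϑ z ≠ ⊥)
    (hpos : ∀ t : ℝ, 0 < t → ∀ z, ϑ (t • z) = (t : EReal) * ϑ z)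
    (hconv : ∀ z₁ z₂ : Z, ∀ a b : ℝ, 0 ≤ a → 0 ≤ b → a + b = 1 →
      ϑ (a • z₁ + b • z₂) ≤ (a : EReal) * ϑ z₁ + (b : EReal) * ϑ z₂)
    (x y : Z) : ϑ (x + y) ≤ ϑ x + ϑ y := by
  by_cases hx : ϑ x = ⊤
  · rw [hx, EReal.top_add_of_ne_bot (hbot y)]; exact le_top
  by_cases hy : ϑ y = ⊤
  · rw [hy, EReal.add_top_of_ne_bot (hbot x)]; exact le_top
  obtain ⟨a, ha⟩ : ∃ a : ℝ, ϑ x = (a : EReal) :=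
    ⟨(ϑ x).toReal, (EReal.coe_toReal hx (hbot x)).symm⟩
  obtain ⟨b, hb⟩ : ∃ b : ℝ, ϑ y = (b : EReal) :=
    ⟨(ϑ y).toReal, (EReal.coe_toReal hy (hbot y)).symm⟩
  have hmid := hconv x y (1/2) (1/2) (by norm_num) (by norm_num) (by norm_num)
  rw [ha, hb] at hmid
  have hmid' : ϑ ((1/2 : ℝ) • x + (1/2 : ℝ) • y) ≤ ((1/2 * a + 1/2 * b : ℝ) : EReal) := by
    refine hmid.trans_eq ?_
    rw [← EReal.coe_mul, ← EReal.coe_mul, ← EReal.coe_add]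
  have h2 : (2 : ℝ) • ((1/2 : ℝ) • x + (1/2 : ℝ) • y) = x + y := by
    rw [smul_add, smul_smul, smul_smul]; norm_num
  have h3 := hpos 2 (by norm_num) ((1/2 : ℝ) • x + (1/2 : ℝ) • y)
  rw [h2] at h3
  rw [h3, ha, hb]
  calc ((2 : ℝ) : EReal) * ϑ ((1/2 : ℝ) • x + (1/2 : ℝ) • y)
      ≤ ((2 : ℝ) : EReal) * ((1/2 * a + 1/2 * b : ℝ) : EReal) :=
        mul_le_mul_of_nonneg_left hmid' (by exact_mod_cast (by norm_num : (0:ℝ) ≤ 2))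
    _ = ((a + b : ℝ) : EReal) := by rw [← EReal.coe_mul]; congr 1; ring
    _ = (a : EReal) + (b : EReal) := EReal.coe_add a b

lemma epi_convex {ϑ : Z → EReal}
    (hconv : ∀ z₁ z₂ : Z, ∀ a b : ℝ, 0 ≤ a → 0 ≤ b → a + b = 1 →
      ϑ (a • z₁ + b • z₂) ≤ (a : EReal) * ϑ z₁ + (b : EReal) * ϑ z₂) :
    Convex ℝ {p : Z × ℝ | ϑ p.1 ≤ (p.2 : EReal)} := by
  intro p hp q hq a b ha hb hab
  simp only [Set.mem_setOf_eq] at hp hq ⊢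
  have h1 : ϑ ((a • p + b • q).1) ≤ (a : EReal) * ϑ p.1 + (b : EReal) * ϑ q.1 := by
    simpa using hconv p.1 q.1 a b ha hb hab
  refine h1.trans ?_
  have h2 : (a : EReal) * ϑ p.1 ≤ (a : EReal) * ((p.2 : ℝ) : EReal) :=
    mul_le_mul_of_nonneg_left hp (by exact_mod_cast ha)
  have h3 : (b : EReal) * ϑ q.1 ≤ (b : EReal) * ((q.2 : ℝ) : EReal) :=
    mul_le_mul_of_nonneg_left hq (by exact_mod_cast hb)
  calc (a : EReal) * ϑ p.1 + (b : EReal) * ϑ q.1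
      ≤ (a : EReal) * (p.2 : EReal) + (b : EReal) * (q.2 : EReal) := add_le_add h2 h3
    _ = ((a * p.2 + b * q.2 : ℝ) : EReal) := by
        rw [← EReal.coe_mul, ← EReal.coe_mul, ← EReal.coe_add]
    _ = (((a • p + b • q).2 : ℝ) : EReal) := by simp [smul_eq_mul]

lemma epi_closed {ϑ : Z → EReal} (hlsc : LowerSemicontinuous ϑ) :
    IsClosed {p : Z × ℝ | ϑ p.1 ≤ (p.2 : EReal)} := by
  rw [← isOpen_compl_iff, isOpen_iff_mem_nhds]
  rintro ⟨x, r⟩ hp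
  simp only [Set.mem_compl_iff, Set.mem_setOf_eq, not_le] at hp
  obtain ⟨c, hc1, hc2⟩ := EReal.exists_between_coe_real hp
  have e1 : ∀ᶠ q : Z × ℝ in 𝓝 (x, r), (c : EReal) < ϑ q.1 :=
    (continuous_fst.tendsto (x, r)).eventually (hlsc x _ hc2)
  have hrc : r < c := by exact_mod_cast hc1
  have e2 : ∀ᶠ q : Z × ℝ in 𝓝 (x, r), q.2 < c :=
    (continuous_snd.tendsto (x, r)).eventually (eventually_lt_nhds hrc)
  filter_upwards [e1, e2] with q h1 h2
  simp only [Set.mem_compl_iff, Set.mem_setOf_eq, not_le]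
  exact lt_trans (by exact_mod_cast h2) h1

lemma key_support {ϑ : Z → EReal} (hbot : ∀ z, ϑ z ≠ ⊥)
    (hlsc : LowerSemicontinuous ϑ) (h0 : ϑ 0 = 0)
    (hpos : ∀ t : ℝ, 0 < t → ∀ z, ϑ (t • z) = (t : EReal) * ϑ z)
    (hconv : ∀ z₁ z₂ : Z, ∀ a b : ℝ, 0 ≤ a → 0 ≤ b → a + b = 1 →
      ϑ (a • z₁ + b • z₂) ≤ (a : EReal) * ϑ z₁ + (b : EReal) * ϑ z₂)
    {μb : Z} (hμbs : μb ∈ subdiff ϑ 0)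
    {w : Z} (hw : ∀ v ∈ subdiff ϑ 0, ⟪w, v - μb⟫ ≤ (0 : ℝ)) :
    ϑ w ≤ ((⟪μb, w⟫ : ℝ) : EReal) := by
  by_contra hcon
  push_neg at hcon
  have hnot : (w, (⟪μb, w⟫ : ℝ)) ∉ {p : Z × ℝ | ϑ p.1 ≤ (p.2 : EReal)} := by
    simp only [Set.mem_setOf_eq, not_le]
    exact hcon
  obtain ⟨f, u, hfu, hmem⟩ :=
    geometric_hahn_banach_point_closed (epi_convex hconv) (epi_closed hlsc) hnot
  set s₀ : ℝ := f (0, 1) with hs₀def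
  have hf : ∀ (zz : Z) (a : ℝ), f (zz, a) = f (zz, 0) + a * s₀ := by
    intro zz a
    have hzz : ((zz, a) : Z × ℝ) = (zz, 0) + a • ((0 : Z), (1 : ℝ)) := by
      simp [Prod.ext_iff]
    rw [hzz, map_add, map_smul, smul_eq_mul]
  haveI : CompleteSpace Z := FiniteDimensional.complete ℝ Z
  set d : Z := (InnerProductSpace.toDual ℝ Z).symm
      (f.comp (ContinuousLinearMap.inl ℝ Z ℝ)) with hdd
  have hd : ∀ zz : Z, ⟪d, zz⟫ = f (zz, 0) := by
    intro zz
    rw [hdd, InnerProductSpace.toDual_symm_apply]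
    simp
  have hzero : f ((0 : Z), (0 : ℝ)) = 0 := by
    rw [show ((0 : Z), (0 : ℝ)) = (0 : Z × ℝ) from rfl, map_zero]
  have hu0 : u < 0 := by
    have := hmem (0, 0) (by simp [h0])
    rwa [hzero] at this
  have hge : ∀ (zz : Z) (c : ℝ), ϑ zz = (c : EReal) → u < f (zz, 0) + c * s₀ := by
    intro zz c hzc
    have := hmem (zz, c) (by simp [hzc])
    rwa [hf] at this
  have hsmul : ∀ (s : ℝ), ∀ zz : Z, f ((s • zz : Z), 0) = s * f (zz, 0) := by
    intro s zz
    have : ((s • zz : Z), (0 : ℝ)) = s • ((zz, 0) : Z × ℝ) := by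
      simp [Prod.ext_iff]
    rw [this, map_smul, smul_eq_mul]
  have hscale : ∀ (zz : Z) (c : ℝ), ϑ zz = (c : EReal) → 0 ≤ f (zz, 0) + c * s₀ := by
    intro zz c hzc
    by_contra hneg
    push_neg at hneg
    have hδne : f (zz, 0) + c * s₀ ≠ 0 := ne_of_lt hneg
    set s : ℝ := (u - 1) / (f (zz, 0) + c * s₀) with hsdef
    have hs : (0 : ℝ) < s := div_pos_of_neg_of_neg (by linarith) hneg
    have hϑs : ϑ (s • zz) = ((s * c : ℝ) : EReal) := by
      rw [hpos s hs, hzc, ← EReal.coe_mul]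
    have hmemt := hge (s • zz) (s * c) hϑs
    rw [hsmul s zz] at hmemt
    have hring : s * f (zz, 0) + s * c * s₀ = s * (f (zz, 0) + c * s₀) := by ring
    rw [hring, hsdef, div_mul_cancel₀ _ hδne] at hmemt
    linarith
  have hs₀ : 0 ≤ s₀ := by
    by_contra hneg
    push_neg at hneg
    have ha : (0 : ℝ) < (u - 1) / s₀ := div_pos_of_neg_of_neg (by linarith) hneg
    have hmema := hmem (0, (u - 1) / s₀) (by
      simp only [Set.mem_setOf_eq, h0]
      exact_mod_cast ha.le)
    rw [hf, hzero, zero_add, div_mul_cancel₀ _ (ne_of_lt hneg)] at hmema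
    linarith
  rw [hf] at hfu
  rcases eq_or_lt_of_le hs₀ with hs0 | hspos
  · -- s₀ = 0
    have hv' : μb - d ∈ subdiff ϑ 0 := by
      rw [mem_subdiff_zero' h0]
      intro y
      by_cases hy : ϑ y = ⊤
      · rw [hy]; exact le_top
      obtain ⟨cy, hcy⟩ : ∃ cy : ℝ, ϑ y = (cy : EReal) :=
        ⟨(ϑ y).toReal, (EReal.coe_toReal hy (hbot y)).symm⟩
      rw [hcy, EReal.coe_le_coe_iff]
      have h1 : 0 ≤ f (y, 0) + cy * s₀ := hscale y cy hcy
      rw [← hs0, mul_zero, add_zero] at h1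
      have h2 : (⟪μb, y⟫ : ℝ) ≤ cy := by
        have := (mem_subdiff_zero' h0).1 hμbs y
        rw [hcy] at this
        exact_mod_cast this
      rw [inner_sub_left, hd]
      linarith
    have hle := hw _ hv'
    rw [show μb - d - μb = -d by abel, inner_neg_right] at hle
    have hdw : f (w, 0) < 0 := by
      rw [← hs0, mul_zero, add_zero] at hfu
      linarith
    have hcomm : ⟪w, d⟫ = ⟪d, w⟫ := real_inner_comm d w
    rw [hd] at hcomm
    linarith
  · -- s₀ > 0
    set v' : Z := (-(1 / s₀)) • d with hv'def
    have hv'inner : ∀ zz : Z, ⟪v', zz⟫ = -(f (zz, 0)) / s₀ := by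
      intro zz
      rw [hv'def, real_inner_smul_left, hd]
      field_simp
    have hv' : v' ∈ subdiff ϑ 0 := by
      rw [mem_subdiff_zero' h0]
      intro y
      by_cases hy : ϑ y = ⊤
      · rw [hy]; exact le_top
      obtain ⟨cy, hcy⟩ : ∃ cy : ℝ, ϑ y = (cy : EReal) :=
        ⟨(ϑ y).toReal, (EReal.coe_toReal hy (hbot y)).symm⟩
      rw [hcy, EReal.coe_le_coe_iff, hv'inner]
      have h1 := hscale y cy hcy
      rw [div_le_iff₀ hspos]
      linarith
    have hle := hw _ hv'
    rw [inner_sub_right] at hle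
    have hcomm1 : ⟪w, v'⟫ = ⟪v', w⟫ := real_inner_comm v' w
    have hcomm2 : ⟪w, μb⟫ = ⟪μb, w⟫ := real_inner_comm μb w
    have hx : -(f (w, 0)) / s₀ ≤ ⟪μb, w⟫ := by
      rw [← hv'inner w, ← hcomm1]
      linarith
    rw [div_le_iff₀ hspos] at hx
    nlinarith

lemma normal_eq_zero {ϑ : Z → EReal} {μb w : Z}
    (hμb : μb ∈ intrinsicInterior ℝ (subdiff ϑ 0))
    (hw : ∀ v ∈ subdiff ϑ 0, ⟪w, v - μb⟫ ≤ (0 : ℝ)) :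
    ∀ v ∈ subdiff ϑ 0, ⟪w, v - μb⟫ = 0 := by
  intro v hv
  refine le_antisymm (hw v hv) ?_
  obtain ⟨x, hx, hxe⟩ := hμb
  have hμmem : μb ∈ subdiff ϑ 0 := intrinsicInterior_subset ⟨x, hx, hxe⟩
  have hμspan : μb ∈ affineSpan ℝ (subdiff ϑ 0) := subset_affineSpan ℝ _ hμmem
  have hvspan : v ∈ affineSpan ℝ (subdiff ϑ 0) := subset_affineSpan ℝ _ hv
  have hmemc : ∀ ε : ℝ, ε • (μb - v) + μb ∈ affineSpan ℝ (subdiff ϑ 0) := by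
    intro ε
    have := AffineSubspace.smul_vsub_vadd_mem (affineSpan ℝ (subdiff ϑ 0)) ε
      hμspan hvspan hμspan
    simpa [vsub_eq_sub, vadd_eq_add] using this
  set c : ℝ → affineSpan ℝ (subdiff ϑ 0) := fun ε => ⟨ε • (μb - v) + μb, hmemc ε⟩ with hc
  have hcont : Continuous c := by
    apply Continuous.subtype_mk
    exact (continuous_id.smul continuous_const).add continuous_const
  have hc0 : c 0 = x := by
    apply Subtype.ext
    simp [hc, hxe]
  have hopen : IsOpen (c ⁻¹' interior (((↑) : affineSpan ℝ (subdiff ϑ 0) → Z) ⁻¹'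
      (subdiff ϑ 0))) := isOpen_interior.preimage hcont
  have h0mem : (0 : ℝ) ∈ c ⁻¹' interior (((↑) : affineSpan ℝ (subdiff ϑ 0) → Z) ⁻¹'
      (subdiff ϑ 0)) := by
    rw [Set.mem_preimage, hc0]; exact hx
  obtain ⟨δ, hδ, hball⟩ := Metric.isOpen_iff.mp hopen 0 h0mem
  have hεmem : (δ / 2) ∈ c ⁻¹' interior (((↑) : affineSpan ℝ (subdiff ϑ 0) → Z) ⁻¹'
      (subdiff ϑ 0)) := by
    apply hball
    rw [Metric.mem_ball, Real.dist_eq, sub_zero, abs_of_pos (by linarith)]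
    linarith
  have hstep : c (δ / 2) ∈ (((↑) : affineSpan ℝ (subdiff ϑ 0) → Z) ⁻¹' (subdiff ϑ 0)) :=
    interior_subset (Set.mem_preimage.mp hεmem)
  have hmem2 : (δ / 2) • (μb - v) + μb ∈ subdiff ϑ 0 := by
    simpa [hc] using hstep
  have hle := hw _ hmem2
  rw [show (δ / 2) • (μb - v) + μb - μb = (δ / 2) • (μb - v) by abel,
    real_inner_smul_right] at hle
  have h1 : ⟪w, μb - v⟫ ≤ 0 := nonpos_of_mul_nonpos_right hle (by linarith)
  rw [show v - μb = -(μb - v) by abel, inner_neg_right]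
  linarith

/-- For a proper lsc sublinear `ϑ` with `μ̄ ∈ ri ∂ϑ(0)` and any direction `w` in the critical
cone `K = N_{∂ϑ(0)}(μ̄)`, along any sequences `t_k ↓ 0` and `(z^k, μ^k) → (0, μ̄)` with
`μ^k ∈ ∂ϑ(z^k)`, the second-order difference quotients have `limsup ≤ 0` and `liminf ≥ 0`. -/
theorem second_order_quotients_vanish_on_critical_cone (ϑ : Z → EReal)
    (hproper_bot : ∀ z, ϑ z ≠ ⊥) (hproper_top : ∃ z, ϑ z ≠ ⊤)
    (hlsc : LowerSemicontinuous ϑ)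
    (h0 : ϑ 0 = 0)
    (hpos : ∀ t : ℝ, 0 < t → ∀ z, ϑ (t • z) = (t : EReal) * ϑ z)
    (hconv : ∀ z₁ z₂ : Z, ∀ a b : ℝ, 0 ≤ a → 0 ≤ b → a + b = 1 →
      ϑ (a • z₁ + b • z₂) ≤ (a : EReal) * ϑ z₁ + (b : EReal) * ϑ z₂)
    (μb : Z) (hμb : μb ∈ intrinsicInterior ℝ (subdiff ϑ 0))
    (w : Z) (hw : ∀ v ∈ subdiff ϑ 0, ⟪w, v - μb⟫ ≤ (0 : ℝ))
    (t : ℕ → ℝ) (z μ : ℕ → Z)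
    (ht : ∀ k, 0 < t k) (ht0 : Tendsto t atTop (𝓝 0))
    (hz : Tendsto z atTop (𝓝 0)) (hμ : Tendsto μ atTop (𝓝 μb))
    (hμmem : ∀ k, μ k ∈ subdiff ϑ (z k)) :
    Filter.limsup (fun k =>
        ((2 / (t k) ^ 2 : ℝ) : EReal) *
          (ϑ (z k + t k • w) - ϑ (z k) - ((t k * ⟪μ k, w⟫ : ℝ) : EReal))) atTop ≤ 0 ∧
    (0 : EReal) ≤ Filter.liminf (fun k =>
        ((2 / (t k) ^ 2 : ℝ) : EReal) *
          (ϑ (z k + t k • w) - ϑ (z k) - ((t k * ⟪μ k, w⟫ : ℝ) : EReal))) atTop := by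
  have hμbs : μb ∈ subdiff ϑ 0 := intrinsicInterior_subset hμb
  have hA : ϑ w ≤ ((⟪μb, w⟫ : ℝ) : EReal) :=
    key_support hproper_bot hlsc h0 hpos hconv hμbs hw
  have heqz : ∀ v ∈ subdiff ϑ 0, ⟪w, v - μb⟫ = 0 := normal_eq_zero hμb hw
  have hterm : ∀ k, ((2 / (t k) ^ 2 : ℝ) : EReal) *
      (ϑ (z k + t k • w) - ϑ (z k) - ((t k * ⟪μ k, w⟫ : ℝ) : EReal)) = 0 := by
    intro k
    obtain ⟨y₀, hy₀⟩ := hproper_top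
    have hzk_top : ϑ (z k) ≠ ⊤ := by
      intro htop
      have h1 := hμmem k y₀
      rw [htop, EReal.top_add_coe] at h1
      exact hy₀ (top_le_iff.mp h1)
    obtain ⟨ck, hck⟩ : ∃ c : ℝ, ϑ (z k) = (c : EReal) :=
      ⟨(ϑ (z k)).toReal, (EReal.coe_toReal hzk_top (hproper_bot _)).symm⟩
    have hμk0 : μ k ∈ subdiff ϑ 0 := by
      rw [mem_subdiff_zero' h0]
      intro y
      have h1 := hμmem k (z k + y)
      rw [add_sub_cancel_left] at h1
      have h2 : ϑ (z k + y) ≤ ϑ (z k) + ϑ y := subadd' hproper_bot hpos hconv _ _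
      have h3 : ϑ (z k) + ((⟪μ k, y⟫ : ℝ) : EReal) ≤ ϑ (z k) + ϑ y := h1.trans h2
      rw [hck, add_comm ((ck : ℝ) : EReal) _, add_comm ((ck : ℝ) : EReal) _] at h3
      exact (EReal.addLECancellable_coe ck).add_le_add_iff_right.mp h3
    have hinner : ⟪μ k, w⟫ = ⟪μb, w⟫ := by
      have h1 := heqz (μ k) hμk0
      rw [inner_sub_right] at h1
      have c1 : ⟪w, μ k⟫ = ⟪μ k, w⟫ := real_inner_comm (μ k) w
      have c2 : ⟪w, μb⟫ = ⟪μb, w⟫ := real_inner_comm μb w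
      linarith
    have hlow : ((ck + t k * ⟪μb, w⟫ : ℝ) : EReal) ≤ ϑ (z k + t k • w) := by
      have h1 := hμmem k (z k + t k • w)
      rw [add_sub_cancel_left, hck, real_inner_smul_right, hinner] at h1
      rw [EReal.coe_add]
      exact h1
    have hup : ϑ (z k + t k • w) ≤ ((ck + t k * ⟪μb, w⟫ : ℝ) : EReal) := by
      have h2 : ϑ (z k + t k • w) ≤ ϑ (z k) + ϑ (t k • w) :=
        subadd' hproper_bot hpos hconv _ _
      rw [hck, hpos (t k) (ht k)] at h2
      have h3 : ((t k : ℝ) : EReal) * ϑ w ≤ ((t k : ℝ) : EReal) * ((⟪μb, w⟫ : ℝ) : EReal) :=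
        mul_le_mul_of_nonneg_left hA (by exact_mod_cast (ht k).le)
      calc ϑ (z k + t k • w) ≤ ((ck : ℝ) : EReal) + ((t k : ℝ) : EReal) * ϑ w := h2
        _ ≤ ((ck : ℝ) : EReal) + ((t k : ℝ) : EReal) * ((⟪μb, w⟫ : ℝ) : EReal) :=
            add_le_add le_rfl h3
        _ = ((ck + t k * ⟪μb, w⟫ : ℝ) : EReal) := by
            rw [← EReal.coe_mul, ← EReal.coe_add]
    have hval : ϑ (z k + t k • w) = ((ck + t k * ⟪μb, w⟫ : ℝ) : EReal) :=
      le_antisymm hup hlow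
    rw [hval, hck, hinner]
    rw [show ((ck + t k * ⟪μb, w⟫ : ℝ) : EReal) - ((ck : ℝ) : EReal) -
        ((t k * ⟪μb, w⟫ : ℝ) : EReal) =
        ((ck + t k * ⟪μb, w⟫ - ck - t k * ⟪μb, w⟫ : ℝ) : EReal) by
      rw [← EReal.coe_sub, ← EReal.coe_sub]]
    rw [show (ck + t k * ⟪μb, w⟫ - ck - t k * ⟪μb, w⟫ : ℝ) = 0 by ring]
    rw [EReal.coe_zero, mul_zero]
  have hfun : (fun k => ((2 / (t k) ^ 2 : ℝ) : EReal) *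
      (ϑ (z k + t k • w) - ϑ (z k) - ((t k * ⟪μ k, w⟫ : ℝ) : EReal))) =
      fun _ => (0 : EReal) := funext hterm
  rw [hfun]
  constructor
  · rw [Filter.limsup_const]
  · rw [Filter.liminf_const]
end
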